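/- If x ≥ 1 and 0 < y ≤ 1, then Γ(y)/x^y ≤ Γ(x,y) ≤ Γ(x)/y^x. -/

import Mathlib

/-!
On `(0, 1)` we have `1 - t ≤ -log t` and `t ≤ -log (1 - t)`. For `x ≥ 1` the first gives
`(1 - t)^(x-1) (-log (1 - t))^(y-1) ≤ (-log t)^(x-1) (-log (1 - t))^(y-1)`, and for `y ≤ 1` the
second gives `(-log t)^(x-1) (-log (1 - t))^(y-1) ≤ t^(y-1) (-log t)^(x-1)`. Both bounds integrate
in closed form: substituting `t = exp (-u)` turns `∫₀¹ t^(p-1) (-log t)^(q-1) dt` into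
`∫₀^∞ u^(q-1) e^(-p u) du = Γ(q) / p^q`, and the lower bound is this integrand reflected by
`t ↦ 1 - t`.
-/

open Real Set intervalIntegral

noncomputable def biGamma (x y : ℝ) : ℝ :=
  ∫ t in (0:ℝ)..1, (-Real.log t) ^ (x - 1) * (-Real.log (1 - t)) ^ (y - 1)

open MeasureTheory

lemma image_exp_neg_Ioi_zero : (fun u : ℝ ↦ exp (-u)) '' Ioi 0 = Ioo 0 1 := by
  ext t
  constructor
  · rintro ⟨u, hu, rfl⟩
    exact ⟨exp_pos _, exp_lt_one_iff.mpr (neg_lt_zero.mpr hu)⟩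
  · rintro ⟨ht0, ht1⟩
    exact ⟨-log t, neg_pos.mpr (log_neg ht0 ht1), by simp [exp_log ht0]⟩

lemma hasDerivWithinAt_exp_neg (s : Set ℝ) (u : ℝ) :
    HasDerivWithinAt (fun u : ℝ ↦ exp (-u)) (-exp (-u)) s u := by
  simpa using (hasDerivAt_neg u).exp.hasDerivWithinAt

lemma injective_exp_neg : Function.Injective fun u : ℝ ↦ exp (-u) :=
  fun _ _ h ↦ neg_injective (exp_injective h)

section ExpNegSubstitution

variable {E : Type*} [NormedAddCommGroup E] [NormedSpace ℝ E]

theorem integral_comp_exp_neg_Ioi (g : ℝ → E) :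
    ∫ u in Ioi 0, exp (-u) • g (exp (-u)) = ∫ t in Ioo 0 1, g t := by
  rw [← image_exp_neg_Ioi_zero, integral_image_eq_integral_abs_deriv_smul measurableSet_Ioi
    (fun u _ ↦ hasDerivWithinAt_exp_neg _ u) injective_exp_neg.injOn]
  simp [abs_of_pos (exp_pos _)]

theorem integrableOn_comp_exp_neg_Ioi (g : ℝ → E) :
    IntegrableOn (fun u ↦ exp (-u) • g (exp (-u))) (Ioi 0) ↔ IntegrableOn g (Ioo 0 1) := by
  rw [← image_exp_neg_Ioi_zero, integrableOn_image_iff_integrableOn_abs_deriv_smul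
    measurableSet_Ioi (fun u _ ↦ hasDerivWithinAt_exp_neg _ u) injective_exp_neg.injOn]
  simp [abs_of_pos (exp_pos _)]

end ExpNegSubstitution

lemma exp_neg_smul_rpow_mul_neg_log_rpow (p q u : ℝ) :
    exp (-u) • (exp (-u) ^ (p - 1) * (-log (exp (-u))) ^ (q - 1))
      = u ^ (q - 1) * exp (-(p * u)) := by
  rw [log_exp, neg_neg, smul_eq_mul, ← exp_mul, ← mul_assoc, ← exp_add, mul_comm]
  congr 2
  ring

theorem integral_rpow_mul_neg_log_rpow {p q : ℝ} (hp : 0 < p) (hq : 0 < q) :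
    ∫ t in (0 : ℝ)..1, t ^ (p - 1) * (-log t) ^ (q - 1) = Gamma q / p ^ q := by
  rw [integral_of_le zero_le_one, integral_Ioc_eq_integral_Ioo, ← integral_comp_exp_neg_Ioi]
  simp_rw [exp_neg_smul_rpow_mul_neg_log_rpow]
  rw [integral_rpow_mul_exp_neg_mul_Ioi hq hp, div_rpow zero_le_one hp.le, one_rpow]
  ring

theorem intervalIntegrable_rpow_mul_neg_log_rpow {p q : ℝ} (hp : 0 < p) (hq : 0 < q) :
    IntervalIntegrable (fun t ↦ t ^ (p - 1) * (-log t) ^ (q - 1)) volume 0 1 := by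
  rw [intervalIntegrable_iff_integrableOn_Ioo_of_le zero_le_one, ← integrableOn_comp_exp_neg_Ioi]
  simp_rw [exp_neg_smul_rpow_mul_neg_log_rpow]
  simpa [neg_mul] using
    integrableOn_rpow_mul_exp_neg_mul_rpow (p := 1) (by linarith : -1 < q - 1) one_pos hp

theorem integral_one_sub_rpow_mul_neg_log_one_sub_rpow {p q : ℝ} (hp : 0 < p) (hq : 0 < q) :
    ∫ t in (0 : ℝ)..1, (1 - t) ^ (p - 1) * (-log (1 - t)) ^ (q - 1) = Gamma q / p ^ q := by
  have hreflect := integral_comp_sub_left (a := 0) (b := 1)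
    (fun t ↦ t ^ (p - 1) * (-log t) ^ (q - 1)) 1
  rw [sub_self, sub_zero] at hreflect
  exact hreflect.trans (integral_rpow_mul_neg_log_rpow hp hq)

theorem intervalIntegrable_one_sub_rpow_mul_neg_log_one_sub_rpow {p q : ℝ} (hp : 0 < p)
    (hq : 0 < q) :
    IntervalIntegrable (fun t ↦ (1 - t) ^ (p - 1) * (-log (1 - t)) ^ (q - 1)) volume 0 1 := by
  simpa using ((intervalIntegrable_rpow_mul_neg_log_rpow hp hq).comp_sub_left 1).symm

lemma one_sub_le_neg_log {t : ℝ} (ht : 0 < t) : 1 - t ≤ -log t := by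
  linarith [log_le_sub_one_of_pos ht]

lemma neg_log_nonneg {t : ℝ} (ht : t ∈ Ioo (0 : ℝ) 1) : 0 ≤ -log t :=
  neg_nonneg.mpr (log_nonpos ht.1.le ht.2.le)

lemma one_sub_mem_Ioo {t : ℝ} (ht : t ∈ Ioo (0 : ℝ) 1) : 1 - t ∈ Ioo (0 : ℝ) 1 :=
  ⟨sub_pos.mpr ht.2, sub_lt_self 1 ht.1⟩

noncomputable def biGammaIntegrand (x y t : ℝ) : ℝ :=
  (-log t) ^ (x - 1) * (-log (1 - t)) ^ (y - 1)

section BiGammaIntegrand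

variable {x y t : ℝ}

lemma biGamma_eq_integral_biGammaIntegrand :
    biGamma x y = ∫ t in (0 : ℝ)..1, biGammaIntegrand x y t := rfl

lemma biGammaIntegrand_nonneg (ht : t ∈ Ioo (0 : ℝ) 1) : 0 ≤ biGammaIntegrand x y t :=
  mul_nonneg (rpow_nonneg (neg_log_nonneg ht) _)
    (rpow_nonneg (neg_log_nonneg (one_sub_mem_Ioo ht)) _)

lemma one_sub_rpow_mul_le_biGammaIntegrand (hx : 1 ≤ x) (ht : t ∈ Ioo (0 : ℝ) 1) :
    (1 - t) ^ (x - 1) * (-log (1 - t)) ^ (y - 1) ≤ biGammaIntegrand x y t := by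
  exact mul_le_mul_of_nonneg_right
    (rpow_le_rpow (one_sub_mem_Ioo ht).1.le (one_sub_le_neg_log ht.1) (by linarith))
    (rpow_nonneg (neg_log_nonneg (one_sub_mem_Ioo ht)) _)

lemma biGammaIntegrand_le_rpow_mul (hy1 : y ≤ 1) (ht : t ∈ Ioo (0 : ℝ) 1) :
    biGammaIntegrand x y t ≤ t ^ (y - 1) * (-log t) ^ (x - 1) := by
  have hlog : t ≤ -log (1 - t) := by simpa using one_sub_le_neg_log (one_sub_mem_Ioo ht).1
  rw [biGammaIntegrand, mul_comm]
  exact mul_le_mul_of_nonneg_right (rpow_le_rpow_of_nonpos ht.1 hlog (by linarith))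
    (rpow_nonneg (neg_log_nonneg ht) _)

lemma intervalIntegrable_biGammaIntegrand (hx : 0 < x) (hy : 0 < y) (hy1 : y ≤ 1) :
    IntervalIntegrable (biGammaIntegrand x y) volume 0 1 := by
  rw [intervalIntegrable_iff_integrableOn_Ioo_of_le zero_le_one]
  refine ((intervalIntegrable_iff_integrableOn_Ioo_of_le zero_le_one).1
    (intervalIntegrable_rpow_mul_neg_log_rpow hy hx)).mono' ?_ ?_
  · unfold biGammaIntegrand
    fun_prop
  · refine (ae_restrict_iff' measurableSet_Ioo).2 (.of_forall fun t ht ↦ ?_)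
    rw [norm_of_nonneg (biGammaIntegrand_nonneg ht)]
    exact biGammaIntegrand_le_rpow_mul hy1 ht

end BiGammaIntegrand

theorem biGamma_between (x y : ℝ) (hx : 1 ≤ x) (hy0 : 0 < y) (hy1 : y ≤ 1) :
    Real.Gamma y / x ^ y ≤ biGamma x y ∧ biGamma x y ≤ Real.Gamma x / y ^ x := by
  have hx0 : 0 < x := by linarith
  have hf := intervalIntegrable_biGammaIntegrand hx0 hy0 hy1
  rw [biGamma_eq_integral_biGammaIntegrand]
  constructor
  · rw [← integral_one_sub_rpow_mul_neg_log_one_sub_rpow hx0 hy0]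
    exact integral_mono_on_of_le_Ioo zero_le_one
      (intervalIntegrable_one_sub_rpow_mul_neg_log_one_sub_rpow hx0 hy0) hf
      fun t ht ↦ one_sub_rpow_mul_le_biGammaIntegrand hx ht
  · rw [← integral_rpow_mul_neg_log_rpow hy0 hx0]
    exact integral_mono_on_of_le_Ioo zero_le_one hf
      (intervalIntegrable_rpow_mul_neg_log_rpow hy0 hx0)
      fun t ht ↦ biGammaIntegrand_le_rpow_mul hy1 ht
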